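/- arXiv:1605.08962 — 3 statements merged into one kernel-verified Lean document; each statement's English description precedes it below -/
import Mathlib

section
/- Let Δe_k satisfy Δe_{k+1} = (A - KCA) Δe_k - K y^a_{k+1} + (B - KCB) u^a_k with Δe_0 = 0, and define Δz_{k+1} = CA Δe_k + y^a_{k+1} + CB u^a_k. Suppose additionally the attacker's sequences satisfy y^a_{k+1} = -CA Δe_k - CB u^a_k + ε_k for some sequence ε_k. Define the coded residue difference Δz'_{k+1} via the coded error Δe'_{k+1} = (A - KCA) Δe'_k - K Σ^{-1} y^a_{k+1} + (B - KCB) u^a_k (with Δe'_0 = 0) and Δz'_{k+1} = CA Δe'_k + Σ^{-1} y^a_{k+1} + CB u^a_k, where Σ is an invertible p×p matrix. Then Δz'_{k+1} = CA Σ_{j=1}^{k} (A - KCA)^{k-j} K (I - Σ^{-1}) y^a_j + (Σ^{-1} - I) y^a_{k+1} + ε_k. -/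
/-- identity (17) of the paper for the coded residue difference. -/
theorem stmt_2 {n m p : ℕ}
    (A : Matrix (Fin n) (Fin n) ℝ) (B : Matrix (Fin n) (Fin m) ℝ)
    (C : Matrix (Fin p) (Fin n) ℝ) (K : Matrix (Fin n) (Fin p) ℝ)
    (S : Matrix (Fin p) (Fin p) ℝ) (hS : IsUnit S.det)
    (Δe Δe' : ℕ → Fin n → ℝ) (Δz Δz' : ℕ → Fin p → ℝ)
    (ya : ℕ → Fin p → ℝ) (ua : ℕ → Fin m → ℝ) (ε : ℕ → Fin p → ℝ)
    (h0 : Δe 0 = 0)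
    (hrec : ∀ k, Δe (k + 1) =
      (A - K * C * A).mulVec (Δe k) - K.mulVec (ya (k + 1))
        + (B - K * C * B).mulVec (ua k))
    (hz : ∀ k, Δz (k + 1) =
      (C * A).mulVec (Δe k) + ya (k + 1) + (C * B).mulVec (ua k))
    (hstealth : ∀ k, ya (k + 1) =
      -(C * A).mulVec (Δe k) - (C * B).mulVec (ua k) + ε k)
    (h0' : Δe' 0 = 0)
    (hrec' : ∀ k, Δe' (k + 1) =
      (A - K * C * A).mulVec (Δe' k) - K.mulVec (S⁻¹.mulVec (ya (k + 1)))
        + (B - K * C * B).mulVec (ua k))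
    (hz' : ∀ k, Δz' (k + 1) =
      (C * A).mulVec (Δe' k) + S⁻¹.mulVec (ya (k + 1)) + (C * B).mulVec (ua k)) :
    ∀ k, Δz' (k + 1) =
      (C * A).mulVec (∑ j ∈ Finset.Icc 1 k,
          ((A - K * C * A) ^ (k - j)).mulVec ((K * (1 - S⁻¹)).mulVec (ya j)))
        + (S⁻¹ - 1).mulVec (ya (k + 1)) + ε k := by
  set M := A - K * C * A with hM
  have key : ∀ k, Δe' k - Δe k = ∑ j ∈ Finset.Icc 1 k,
      (M ^ (k - j)).mulVec ((K * (1 - S⁻¹)).mulVec (ya j)) := by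
    intro k
    induction k with
    | zero => simp [h0, h0']
    | succ k ih =>
      have hstep : Δe' (k + 1) - Δe (k + 1) =
          M.mulVec (Δe' k - Δe k) + (K * (1 - S⁻¹)).mulVec (ya (k + 1)) := by
        rw [hrec, hrec']
        simp only [Matrix.mul_sub, Matrix.mul_one, Matrix.sub_mulVec,
          Matrix.mulVec_sub, ← Matrix.mulVec_mulVec]
        abel
      have hsum : M.mulVec (∑ j ∈ Finset.Icc 1 k,
          (M ^ (k - j)).mulVec ((K * (1 - S⁻¹)).mulVec (ya j))) =
          ∑ j ∈ Finset.Icc 1 k,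
            M.mulVec ((M ^ (k - j)).mulVec ((K * (1 - S⁻¹)).mulVec (ya j))) :=
        map_sum M.mulVecLin _ _
      rw [hstep, ih, hsum, Finset.sum_Icc_succ_top (by omega : 1 ≤ k + 1)]
      congr 1
      · apply Finset.sum_congr rfl
        intro j hj
        have hj' : j ≤ k := (Finset.mem_Icc.mp hj).2
        have : k + 1 - j = (k - j) + 1 := by omega
        rw [Matrix.mulVec_mulVec, this, pow_succ']
      · simp
  intro k
  have hd : Δe' k = Δe k + ∑ j ∈ Finset.Icc 1 k,
      (M ^ (k - j)).mulVec ((K * (1 - S⁻¹)).mulVec (ya j)) := by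
    rw [← key k]; abel
  have hε : ε k = (C * A).mulVec (Δe k) + ya (k + 1) + (C * B).mulVec (ua k) := by
    rw [hstealth k]; abel
  rw [hz', hd, Matrix.mulVec_add, Matrix.sub_mulVec, Matrix.one_mulVec, hε]
  abel
end

section
/- Consider the normal system residue z_{k+1} = y_{k+1} - C(A x̂_k + B u_k) and the system with an additional additive control input u^d_k replacing u_k by u_k + u^d_k in both plant and estimator. Formally: let Δe_k, Δz_k be the error/residue differences under injection (y^a, u^a) with controls u_k, and Δẽ_k, Δz̃_k be the same quantities with controls u_k + u^d_k. Then Δẽ_k = Δe_k and Δz̃_k = Δz_k for all k; i.e., the residue difference dynamics Δz̃_{k+1} = CA Δẽ_k + y^a_{k+1} + CB u^a_k are independent of the additive monitoring input u^d_k. -/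
/-- Lemma 1 of the paper: the error/residue differences between
the attacked and unattacked closed loops are unchanged when the control `u_k`
is replaced by `u_k + u^d_k` (no additive active monitor helps detection). -/
theorem stmt_14 {n m p : ℕ}
    (A : Matrix (Fin n) (Fin n) ℝ) (B : Matrix (Fin n) (Fin m) ℝ)
    (C : Matrix (Fin p) (Fin n) ℝ) (K : Matrix (Fin n) (Fin p) ℝ)
    (u ud ua : ℕ → Fin m → ℝ) (w : ℕ → Fin n → ℝ) (v ya : ℕ → Fin p → ℝ)
    -- normal system with control u
    (x xh : ℕ → Fin n → ℝ) (y z : ℕ → Fin p → ℝ)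
    (hx : ∀ k, x (k + 1) = A.mulVec (x k) + B.mulVec (u k) + w k)
    (hy : ∀ k, y k = C.mulVec (x k) + v k)
    (hz : ∀ k, z (k + 1) = y (k + 1) - C.mulVec (A.mulVec (xh k) + B.mulVec (u k)))
    (hxh : ∀ k, xh (k + 1) = A.mulVec (xh k) + B.mulVec (u k) + K.mulVec (z (k + 1)))
    -- attacked system with control u and injections (ya, ua)
    (x' xh' : ℕ → Fin n → ℝ) (y' z' : ℕ → Fin p → ℝ)
    (hx' : ∀ k, x' (k + 1) = A.mulVec (x' k) + B.mulVec (u k + ua k) + w k)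
    (hy' : ∀ k, y' k = C.mulVec (x' k) + ya k + v k)
    (hz' : ∀ k, z' (k + 1) = y' (k + 1) - C.mulVec (A.mulVec (xh' k) + B.mulVec (u k)))
    (hxh' : ∀ k, xh' (k + 1) = A.mulVec (xh' k) + B.mulVec (u k) + K.mulVec (z' (k + 1)))
    -- normal system with control u + ud
    (xt xht : ℕ → Fin n → ℝ) (yt zt : ℕ → Fin p → ℝ)
    (hxt : ∀ k, xt (k + 1) = A.mulVec (xt k) + B.mulVec (u k + ud k) + w k)
    (hyt : ∀ k, yt k = C.mulVec (xt k) + v k)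
    (hzt : ∀ k, zt (k + 1) = yt (k + 1) - C.mulVec (A.mulVec (xht k) + B.mulVec (u k + ud k)))
    (hxht : ∀ k, xht (k + 1) = A.mulVec (xht k) + B.mulVec (u k + ud k) + K.mulVec (zt (k + 1)))
    -- attacked system with control u + ud and the same injections (ya, ua)
    (xt' xht' : ℕ → Fin n → ℝ) (yt' zt' : ℕ → Fin p → ℝ)
    (hxt' : ∀ k, xt' (k + 1) = A.mulVec (xt' k) + B.mulVec (u k + ud k + ua k) + w k)
    (hyt' : ∀ k, yt' k = C.mulVec (xt' k) + ya k + v k)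
    (hzt' : ∀ k, zt' (k + 1) = yt' (k + 1) - C.mulVec (A.mulVec (xht' k) + B.mulVec (u k + ud k)))
    (hxht' : ∀ k, xht' (k + 1) = A.mulVec (xht' k) + B.mulVec (u k + ud k) + K.mulVec (zt' (k + 1)))
    -- matching initial conditions
    (hx0 : x' 0 = x 0) (hxh0 : xh' 0 = xh 0)
    (hxt0 : xt 0 = x 0) (hxht0 : xht 0 = xh 0)
    (hxt0' : xt' 0 = x 0) (hxht0' : xht' 0 = xh 0) :
    (∀ k, (xt' k - xht' k) - (xt k - xht k) = (x' k - xh' k) - (x k - xh k)) ∧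
      (∀ k, zt' (k + 1) - zt (k + 1) = z' (k + 1) - z (k + 1)) := by
  have key : ∀ k, xt' k - xt k = x' k - x k ∧ xht' k - xht k = xh' k - xh k := by
    intro k
    induction k with
    | zero =>
      rw [hxt0', hxt0, hx0, hxht0', hxht0, hxh0]
      exact ⟨rfl, rfl⟩
    | succ k ih =>
      obtain ⟨h1, h2⟩ := ih
      have e1 : xt' k = xt k + (x' k - x k) := by rw [← h1]; abel
      have e2 : xht' k = xht k + (xh' k - xh k) := by rw [← h2]; abel
      have hzeq : zt' (k + 1) - zt (k + 1) = z' (k + 1) - z (k + 1) := by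
        rw [hzt', hzt, hz', hz, hyt', hyt, hy', hy, hxt', hxt, hx', hx, e1, e2]
        simp only [Matrix.mulVec_add, Matrix.mulVec_sub]
        abel
      constructor
      · rw [hxt', hxt, hx', hx, e1]
        simp only [Matrix.mulVec_add, Matrix.mulVec_sub]
        abel
      · rw [hxht', hxht, hxh', hxh, e2]
        have e3 : zt' (k + 1) = zt (k + 1) + (z' (k + 1) - z (k + 1)) := by
          rw [← hzeq]; abel
        rw [e3]
        simp only [Matrix.mulVec_add, Matrix.mulVec_sub]
        abel
  have hzq : ∀ k, zt' (k + 1) - zt (k + 1) = z' (k + 1) - z (k + 1) := by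
    intro k
    obtain ⟨h1, h2⟩ := key k
    have e1 : xt' k = xt k + (x' k - x k) := by rw [← h1]; abel
    have e2 : xht' k = xht k + (xh' k - xh k) := by rw [← h2]; abel
    rw [hzt', hzt, hz', hz, hyt', hyt, hy', hy, hxt', hxt, hx', hx, e1, e2]
    simp only [Matrix.mulVec_add, Matrix.mulVec_sub]
    abel
  refine ⟨fun k => ?_, hzq⟩
  obtain ⟨h1, h2⟩ := key k
  have e1 : xt' k = xt k + (x' k - x k) := by rw [← h1]; abel
  have e2 : xht' k = xht k + (xh' k - xh k) := by rw [← h2]; abel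
  rw [e1, e2]; abel
end

section
/- Let C ∈ R^{p×n} and v_1, …, v_u ∈ R^n, and suppose the Givens rotation G(i,j,θ) with θ ∈ (0, π/2] is applied where indices i, j are chosen so that every nonzero vector in span(Cv_1, …, Cv_u) has a nonzero component in coordinate i or coordinate j. If span(Cv_1, …, Cv_u) is contained in span(e_i, e_j) (the coordinate plane of the rotation), then for every nonzero w ∈ span(Cv_1, …, Cv_u), ⟨w, G(i,j,θ) w⟩ < ‖G(i,j,θ) w‖_2 ‖w‖_2. -/
open Matrix Real Set
open scoped RealInnerProductSpace

/-- The Givens rotation matrix `G(i,j,θ)`: the identity matrix except that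
`G i i = G j j = cos θ`, `G i j = -sin θ`, `G j i = sin θ`. -/
noncomputable def givens (p : ℕ) (i j : Fin p) (θ : ℝ) : Matrix (Fin p) (Fin p) ℝ :=
  Matrix.of fun a b =>
    if a = i ∧ b = i then Real.cos θ
    else if a = i ∧ b = j then -Real.sin θ
    else if a = j ∧ b = i then Real.sin θ
    else if a = j ∧ b = j then Real.cos θ
    else if a = b then 1 else 0

lemma inner_combo {p : ℕ} {i j : Fin p} (hij : i ≠ j) (a b c d : ℝ) :
    ⟪(a • EuclideanSpace.single i (1:ℝ) + b • EuclideanSpace.single j 1 : EuclideanSpace ℝ (Fin p)),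
     (c • EuclideanSpace.single i (1:ℝ) + d • EuclideanSpace.single j 1 : EuclideanSpace ℝ (Fin p))⟫
    = a * c + b * d := by
  simp [inner_add_left, inner_add_right, inner_smul_left, inner_smul_right,
    EuclideanSpace.inner_single_left, EuclideanSpace.single_apply, hij, hij.symm]
  ring

lemma givens_mulVec {p : ℕ} {i j : Fin p} (hij : i ≠ j) (θ a b : ℝ) :
    ((EuclideanSpace.equiv (Fin p) ℝ).symm ((givens p i j θ).mulVec
        (a • EuclideanSpace.single i (1:ℝ) + b • EuclideanSpace.single j 1 : EuclideanSpace ℝ (Fin p)))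
      : EuclideanSpace ℝ (Fin p))
    = ((a * Real.cos θ - b * Real.sin θ) • EuclideanSpace.single i (1:ℝ)
        + (a * Real.sin θ + b * Real.cos θ) • EuclideanSpace.single j 1 : EuclideanSpace ℝ (Fin p)) := by
  have key : (givens p i j θ).mulVec
      ((a • EuclideanSpace.single i (1:ℝ) + b • EuclideanSpace.single j 1 : EuclideanSpace ℝ (Fin p)) : Fin p → ℝ)
    = (((a * Real.cos θ - b * Real.sin θ) • EuclideanSpace.single i (1:ℝ)
        + (a * Real.sin θ + b * Real.cos θ) • EuclideanSpace.single j 1 : EuclideanSpace ℝ (Fin p)) : Fin p → ℝ) := by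
    funext k
    have : ∀ m, ((a • EuclideanSpace.single i (1:ℝ) + b • EuclideanSpace.single j 1 : EuclideanSpace ℝ (Fin p)) : Fin p → ℝ) m
        = a * (if m = i then 1 else 0) + b * (if m = j then 1 else 0) := by
      intro m; simp [EuclideanSpace.single_apply]
    simp only [Matrix.mulVec, dotProduct, this, mul_add, mul_ite, mul_one, mul_zero,
      Finset.sum_add_distrib, Finset.sum_ite_eq', Finset.mem_univ, if_true]
    rcases eq_or_ne k i with rfl | hki <;> rcases eq_or_ne k j with rfl | hkj <;>
      simp_all [givens, EuclideanSpace.single_apply, hij, hij.symm] <;> ring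
  exact congrArg _ key

/-- correctness of Algorithm 1: if `span(Cv₁,…,Cv_u)` is
contained in the coordinate plane of the rotation `G(i,j,θ)`, `θ ∈ (0,π/2]`,
then the rotation changes the direction of every nonzero vector of the span. -/
theorem stmt_17 {n p u : ℕ}
    (C : Matrix (Fin p) (Fin n) ℝ) (v : Fin u → Fin n → ℝ)
    (i j : Fin p) (hij : i ≠ j) (θ : ℝ) (hθ : θ ∈ Ioc 0 (π / 2))
    (hspan : Submodule.span ℝ
        (Set.range fun t => ((EuclideanSpace.equiv (Fin p) ℝ).symm
          (C.mulVec (v t)) : EuclideanSpace ℝ (Fin p))) ≤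
      Submodule.span ℝ
        {EuclideanSpace.single i (1 : ℝ), EuclideanSpace.single j (1 : ℝ)}) :
    ∀ w ∈ Submodule.span ℝ
        (Set.range fun t => ((EuclideanSpace.equiv (Fin p) ℝ).symm
          (C.mulVec (v t)) : EuclideanSpace ℝ (Fin p))),
      w ≠ 0 →
      ⟪w, (EuclideanSpace.equiv (Fin p) ℝ).symm ((givens p i j θ).mulVec w)⟫
        < ‖(EuclideanSpace.equiv (Fin p) ℝ).symm ((givens p i j θ).mulVec w)‖ * ‖w‖ := by
  intro w hw hw0
  obtain ⟨a, b, hab⟩ := Submodule.mem_span_pair.mp (hspan hw)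
  subst hab
  set c := a * Real.cos θ - b * Real.sin θ with hc
  set d := a * Real.sin θ + b * Real.cos θ with hd
  have hmv : ((EuclideanSpace.equiv (Fin p) ℝ).symm ((givens p i j θ).mulVec
      (a • EuclideanSpace.single i (1:ℝ) + b • EuclideanSpace.single j 1 : EuclideanSpace ℝ (Fin p)))
      : EuclideanSpace ℝ (Fin p))
      = (c • EuclideanSpace.single i (1:ℝ) + d • EuclideanSpace.single j 1 : EuclideanSpace ℝ (Fin p)) :=
    givens_mulVec hij θ a b
  rw [hmv]
  have hnw : ‖(a • EuclideanSpace.single i (1:ℝ) + b • EuclideanSpace.single j 1 : EuclideanSpace ℝ (Fin p))‖ ^ 2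
      = a * a + b * b := by
    rw [← real_inner_self_eq_norm_sq, inner_combo hij]
  have hab0 : 0 < a * a + b * b := by
    rw [← hnw]; exact pow_pos (norm_pos_iff.mpr hw0) 2
  have hsc := Real.sin_sq_add_cos_sq θ
  have hcd : c * c + d * d = a * a + b * b := by rw [hc, hd]; nlinarith
  have hnw' : ‖(c • EuclideanSpace.single i (1:ℝ) + d • EuclideanSpace.single j 1 : EuclideanSpace ℝ (Fin p))‖ ^ 2
      = a * a + b * b := by
    rw [← real_inner_self_eq_norm_sq, inner_combo hij, hcd]
  have hinner : ⟪(a • EuclideanSpace.single i (1:ℝ) + b • EuclideanSpace.single j 1 : EuclideanSpace ℝ (Fin p)),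
      (c • EuclideanSpace.single i (1:ℝ) + d • EuclideanSpace.single j 1 : EuclideanSpace ℝ (Fin p))⟫
      = (a * a + b * b) * Real.cos θ := by
    rw [inner_combo hij, hc, hd]; ring
  have hneq : ‖(c • EuclideanSpace.single i (1:ℝ) + d • EuclideanSpace.single j 1 : EuclideanSpace ℝ (Fin p))‖
      = ‖(a • EuclideanSpace.single i (1:ℝ) + b • EuclideanSpace.single j 1 : EuclideanSpace ℝ (Fin p))‖ := by
    rw [← Real.sqrt_sq (norm_nonneg _), ← Real.sqrt_sq (norm_nonneg
      (a • EuclideanSpace.single i (1:ℝ) + b • EuclideanSpace.single j 1 : EuclideanSpace ℝ (Fin p))),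
      hnw, hnw']
  rw [hinner, hneq]
  have hcos : Real.cos θ < 1 := by
    have := Real.cos_lt_cos_of_nonneg_of_le_pi (le_refl 0)
      (hθ.2.trans (by linarith [Real.pi_pos])) hθ.1
    simpa using this
  have hn2 : ‖(a • EuclideanSpace.single i (1:ℝ) + b • EuclideanSpace.single j 1 : EuclideanSpace ℝ (Fin p))‖
      * ‖(a • EuclideanSpace.single i (1:ℝ) + b • EuclideanSpace.single j 1 : EuclideanSpace ℝ (Fin p))‖
      = a * a + b * b := by rw [← hnw]; ring
  rw [hn2]
  exact mul_lt_of_lt_one_right hab0 hcos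
end
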